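/- arXiv:1704.00327 — 2 statements merged into one kernel-verified Lean document; each statement's English description precedes it below -/
import Mathlib

section
/- Let q, q_d ∈ S² with ⟨q_d, q⟩ > −1, and define d₁Ψ = (1/(√2·√(1 + ⟨q_d, q⟩)))·q × (q × q_d) and d₂Ψ = (1/(√2·√(1 + ⟨q_d, q⟩)))·q_d × (q_d × q) (the differentials of Ψ in its first and second arguments). Then for every v ∈ ℝ³ with ⟨v, q_d⟩ = 0, one has ⟨𝒯(q, q_d)·v, d₁Ψ⟩ = −⟨v, d₂Ψ⟩; that is, the pull-back of d₁Ψ under the transport map equals −d₂Ψ. -/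
open scoped RealInnerProductSpace

/-- Cross product on ℝ³ (as `EuclideanSpace ℝ (Fin 3)`). -/
noncomputable def cross (a b : EuclideanSpace ℝ (Fin 3)) : EuclideanSpace ℝ (Fin 3) :=
  WithLp.toLp 2 ![a 1 * b 2 - a 2 * b 1, a 2 * b 0 - a 0 * b 2, a 0 * b 1 - a 1 * b 0]

/-- Transport map 𝒯(q, q_d)·v = (q_d × v) × q. -/
noncomputable def transport (q qd v : EuclideanSpace ℝ (Fin 3)) : EuclideanSpace ℝ (Fin 3) :=
  cross (cross qd v) q

/-
Pure vector algebra: expanding every double cross product by the BAC-CAB rule gives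
`⟪(q_d × v) × q, q × (q × q_d)⟫ = -‖q‖² ⟪v, q_d × (q_d × q)⟫` for all `q, q_d, v`,
and `d₁Ψ`, `d₂Ψ` are these double cross products scaled by the same factor.
-/

open Matrix WithLp

theorem cross_eq_toLp_crossProduct (a b : EuclideanSpace ℝ (Fin 3)) :
    cross a b = toLp 2 (ofLp a ⨯₃ ofLp b) := by
  simp [cross, cross_apply]

theorem cross_cross_eq_inner_smul_sub_inner_smul (u v w : EuclideanSpace ℝ (Fin 3)) :
    cross (cross u v) w = ⟪u, w⟫ • v - ⟪v, w⟫ • u := by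
  simp only [cross_eq_toLp_crossProduct, cross_cross_eq_smul_sub_smul,
    EuclideanSpace.inner_eq_star_dotProduct, star_trivial, dotProduct_comm (ofLp w)]
  rfl

theorem cross_cross_eq_inner_smul_sub_inner_smul' (u v w : EuclideanSpace ℝ (Fin 3)) :
    cross u (cross v w) = ⟪u, w⟫ • v - ⟪u, v⟫ • w := by
  simp only [cross_eq_toLp_crossProduct, cross_cross_eq_smul_sub_smul',
    EuclideanSpace.inner_eq_star_dotProduct, star_trivial, dotProduct_comm (ofLp w),
    dotProduct_comm (ofLp v)]
  rfl

theorem inner_transport_cross_cross (q qd v : EuclideanSpace ℝ (Fin 3)) :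
    ⟪transport q qd v, cross q (cross q qd)⟫ = -(‖q‖ ^ 2 * ⟪v, cross qd (cross qd q)⟫) := by
  simp only [transport, cross_cross_eq_inner_smul_sub_inner_smul,
    cross_cross_eq_inner_smul_sub_inner_smul', inner_sub_left, inner_sub_right, inner_smul_left,
    inner_smul_right, real_inner_self_eq_norm_sq, real_inner_comm qd, real_inner_comm q v,
    RCLike.conj_to_real]
  ring

theorem transport_pullback_general (q qd : EuclideanSpace ℝ (Fin 3))
    (hq : ‖q‖ = 1)
    (d₁Ψ d₂Ψ : EuclideanSpace ℝ (Fin 3))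
    (hd₁ : d₁Ψ = (1 / (Real.sqrt 2 * Real.sqrt (1 + ⟪qd, q⟫))) • cross q (cross q qd))
    (hd₂ : d₂Ψ = (1 / (Real.sqrt 2 * Real.sqrt (1 + ⟪qd, q⟫))) • cross qd (cross qd q)) :
    ∀ v : EuclideanSpace ℝ (Fin 3), ⟪v, qd⟫ = 0 →
      ⟪transport q qd v, d₁Ψ⟫ = -⟪v, d₂Ψ⟫ := by
  intro v _
  rw [hd₁, hd₂, inner_smul_right, inner_smul_right, inner_transport_cross_cross, hq]
  ring

/-- Pull-back of d₁Ψ under the transport map equals −d₂Ψ: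
for every tangent vector v at q_d, ⟨𝒯(q,q_d)·v, d₁Ψ⟩ = −⟨v, d₂Ψ⟩. -/
theorem transport_pullback (q qd : EuclideanSpace ℝ (Fin 3))
    (hq : ‖q‖ = 1) (hqd : ‖qd‖ = 1) (h : ⟪qd, q⟫ > -1)
    (d₁Ψ d₂Ψ : EuclideanSpace ℝ (Fin 3))
    (hd₁ : d₁Ψ = (1 / (Real.sqrt 2 * Real.sqrt (1 + ⟪qd, q⟫))) • cross q (cross q qd))
    (hd₂ : d₂Ψ = (1 / (Real.sqrt 2 * Real.sqrt (1 + ⟪qd, q⟫))) • cross qd (cross qd q)) :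
    ∀ v : EuclideanSpace ℝ (Fin 3), ⟪v, qd⟫ = 0 →
      ⟪transport q qd v, d₁Ψ⟫ = -⟪v, d₂Ψ⟫ :=
  transport_pullback_general q qd hq d₁Ψ d₂Ψ hd₁ hd₂
end

section
/- For all q, q_d ∈ S² with ⟨q_d, q⟩ > −1, one has ‖⟨q_d, q⟩·q − q_d‖₂ ≤ 2‖e_q(q, q_d)‖₂. -/
open scoped RealInnerProductSpace

/-- Reduced-attitude error vector e_q(q, q_d). -/
noncomputable def eVec (q qd : EuclideanSpace ℝ (Fin 3)) : EuclideanSpace ℝ (Fin 3) :=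
  (1 / (Real.sqrt 2 * Real.sqrt (1 + ⟪qd, q⟫))) • cross q (cross q qd)

/-! By the BAC–CAB rule, `q × (q × q_d) = ⟨q_d, q⟩ q − q_d` for a unit vector `q`, so `e_q` is this
vector scaled by `1 / √(2 (1 + ⟨q_d, q⟩))`, a factor of at least `1 / 2` since `⟨q_d, q⟩ ≤ 1`. -/

open scoped Matrix

lemma cross_eq_crossProduct (a b : EuclideanSpace ℝ (Fin 3)) :
    cross a b = WithLp.toLp 2 (a.ofLp ⨯₃ b.ofLp) := rfl

lemma cross_cross_eq_inner_smul_sub_inner_smul_s13 (a b c : EuclideanSpace ℝ (Fin 3)) :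
    cross a (cross b c) = ⟪a, c⟫ • b - ⟪a, b⟫ • c := by
  rw [real_inner_comm c a]
  simp only [cross_eq_crossProduct, cross_cross_eq_smul_sub_smul',
    EuclideanSpace.inner_eq_star_dotProduct, star_trivial]
  rfl

lemma cross_cross_self_eq_of_norm_eq_one {q : EuclideanSpace ℝ (Fin 3)} (hq : ‖q‖ = 1)
    (p : EuclideanSpace ℝ (Fin 3)) : cross q (cross q p) = ⟪p, q⟫ • q - p := by
  rw [cross_cross_eq_inner_smul_sub_inner_smul_s13, real_inner_self_eq_norm_sq, hq, one_pow,
    one_smul, real_inner_comm p q]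

lemma norm_le_two_mul_norm_one_div_smul {E : Type*} [SeminormedAddCommGroup E] [NormedSpace ℝ E]
    {d : ℝ} (hd₀ : 0 < d) (hd₂ : d ≤ 2) (v : E) : ‖v‖ ≤ 2 * ‖(1 / d) • v‖ := by
  rw [norm_smul, Real.norm_of_nonneg (by positivity), ← mul_assoc, mul_one_div]
  exact le_mul_of_one_le_left (norm_nonneg v) ((one_le_div hd₀).2 hd₂)

/-- ‖⟨q_d,q⟩q − q_d‖ ≤ 2‖e_q(q, q_d)‖ whenever ⟨q_d, q⟩ > −1. -/
theorem norm_proj_le_two_eVec (q qd : EuclideanSpace ℝ (Fin 3))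
    (hq : ‖q‖ = 1) (hqd : ‖qd‖ = 1) (h : ⟪qd, q⟫ > -1) :
    ‖⟪qd, q⟫ • q - qd‖ ≤ 2 * ‖eVec q qd‖ := by
  have h_le_one : ⟪qd, q⟫ ≤ 1 := by simpa [hq, hqd] using real_inner_le_norm qd q
  have hden_pos : 0 < √2 * √(1 + ⟪qd, q⟫) := by
    have : 0 < 1 + ⟪qd, q⟫ := by linarith
    positivity
  have hden_le : √2 * √(1 + ⟪qd, q⟫) ≤ 2 := calc
    √2 * √(1 + ⟪qd, q⟫) ≤ √2 * √2 := by gcongr; linarith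
    _ = 2 := Real.mul_self_sqrt zero_le_two
  rw [eVec, cross_cross_self_eq_of_norm_eq_one hq]
  exact norm_le_two_mul_norm_one_div_smul hden_pos hden_le _
end
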